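/- arXiv:2405.03334 — 6 statements merged into one kernel-verified Lean document; each statement's English description precedes it below -/
import Mathlib

section
/- Let s, ȳ, y̲, U, L ∈ ℝ and α ∈ {0,1}. If s = ȳ − y̲, ȳ ≥ 0, y̲ ≥ 0, ȳ ≤ U·α, and y̲ ≤ −L·(1 − α), then ȳ = max(0, s). -/
/-- soundness of the big-M mixed-integer reformulation of a single
ReLU node: any feasible point of the linear constraint system with binary `α`
reproduces the ReLU output `ȳ = max 0 s`. -/
theorem bigM_relu_sound (s ybar yund U L α : ℝ)
    (hα : α = 0 ∨ α = 1)
    (h1 : s = ybar - yund)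
    (h2 : 0 ≤ ybar) (h3 : 0 ≤ yund)
    (h4 : ybar ≤ U * α)
    (h5 : yund ≤ -L * (1 - α)) :
    ybar = max 0 s := by
  rcases hα with h | h <;> subst h
  · have hy : ybar = 0 := le_antisymm (by linarith) h2
    rw [hy, max_eq_left (by linarith)]
  · have hy : yund = 0 := le_antisymm (by linarith) h3
    rw [max_eq_right (by linarith)]; linarith
end

section
/- Consider a ReLU neural network with K ≥ 1 layers given by weight matrices W^k ∈ ℝ^{n_k × n_{k−1}} and bias vectors b^k ∈ ℝ^{n_k} for k = 1,…,K, defining Φ_NN(x) by y⁰ = x, y^k = σ(W^k y^{k−1} + b^k) for k = 1,…,K−1, and Φ_NN(x) = W^K y^{K−1} + b^K, where σ is the componentwise map t ↦ max(0,t). Suppose vectors y^k, ȳ^k, y̲^k ∈ ℝ^{n_k} and binaries α^k_j ∈ {0,1}, together with bound parameters L^k_j, U^k_j ∈ ℝ, satisfy: y⁰ = x; for every k ∈ {1,…,K−1}: W^k y^{k−1} + b^k = ȳ^k − y̲^k, ȳ^k ≥ 0, y̲^k ≥ 0, y^k = ȳ^k, and for every j, ȳ^k_j ≤ U^k_j α^k_j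 and y̲^k_j ≤ −L^k_j(1 − α^k_j); and y^K = W^K y^{K−1} + b^K. Then y^K = Φ_NN(x). -/
/-- The hidden-layer values of a ReLU network: `y⁰ = x`,
`y^k = σ(W^k y^{k-1} + b^k)` with `σ = max 0` componentwise.
Here `W k`/`b k` are the weights/bias of the `(k+1)`-th layer (0-based indexing). -/
def reluLayerVal (n : ℕ → ℕ) (W : ∀ k, Matrix (Fin (n (k + 1))) (Fin (n k)) ℝ)
    (b : ∀ k, Fin (n (k + 1)) → ℝ) (x : Fin (n 0) → ℝ) : ∀ k, Fin (n k) → ℝ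
  | 0 => x
  | k + 1 => fun j => max 0 ((W k).mulVec (reluLayerVal n W b x k) j + b k j)

/-- The output of a ReLU network with `m + 1` layers: the first `m` layers are
ReLU layers, the last layer is affine: `Φ_NN(x) = W^{m+1} y^m + b^{m+1}`. -/
def reluNetOut (n : ℕ → ℕ) (W : ∀ k, Matrix (Fin (n (k + 1))) (Fin (n k)) ℝ)
    (b : ∀ k, Fin (n (k + 1)) → ℝ) (m : ℕ) (x : Fin (n 0) → ℝ) :
    Fin (n (m + 1)) → ℝ :=
  fun j => (W m).mulVec (reluLayerVal n W b x m) j + b m j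

/-- soundness of the layered big-M mixed-integer encoding of a
ReLU network with `K ≥ 1` layers: every feasible point of the mixed-integer
system reproduces the exact network output `y^K = Φ_NN(x)`, regardless of the
big-M parameters `L`, `U`.  (Layer `k`, `1 ≤ k ≤ K`, has weights `W (k-1)`,
bias `b (k-1)`; since `K ≥ 1`, the index `K` is written as `K - 1 + 1`.) -/
theorem bigM_reluNet_sound (K : ℕ) (hK : 1 ≤ K) (n : ℕ → ℕ)
    (W : ∀ k, Matrix (Fin (n (k + 1))) (Fin (n k)) ℝ)
    (b : ∀ k, Fin (n (k + 1)) → ℝ)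
    (x : Fin (n 0) → ℝ)
    (y : ∀ k, Fin (n k) → ℝ)
    (ybar yund α : ∀ k, Fin (n (k + 1)) → ℝ)
    (L U : ∀ k, Fin (n (k + 1)) → ℝ)
    (hy0 : y 0 = x)
    (hmid : ∀ k, k < K - 1 →
      ((W k).mulVec (y k) + b k = ybar k - yund k) ∧
      (∀ j, 0 ≤ ybar k j) ∧ (∀ j, 0 ≤ yund k j) ∧
      (y (k + 1) = ybar k) ∧
      (∀ j, α k j = 0 ∨ α k j = 1) ∧
      (∀ j, ybar k j ≤ U k j * α k j) ∧
      (∀ j, yund k j ≤ -L k j * (1 - α k j)))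
    (hyK : y (K - 1 + 1) = fun j => (W (K - 1)).mulVec (y (K - 1)) j + b (K - 1) j) :
    y (K - 1 + 1) = reluNetOut n W b (K - 1) x := by

  have key : ∀ k, k ≤ K - 1 → y k = reluLayerVal n W b x k := by
    intro k
    induction k with
    | zero => intro _; simpa [reluLayerVal] using hy0
    | succ k ih =>
      intro hk
      have hk' : k < K - 1 := Nat.lt_of_succ_le hk
      obtain ⟨heq, hbar, hund, hy1, hα, hU, hL⟩ := hmid k hk'
      have hyk := ih (le_of_lt hk')
      funext j
      have hcomp : max 0 ((W k).mulVec (y k) j + b k j) = ybar k j := by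
        have h1 : (W k).mulVec (y k) j + b k j = ybar k j - yund k j := by
          have := congrFun heq j
          simpa using this
        rcases hα j with h0 | h1'
        · have hb0 : ybar k j = 0 := le_antisymm (by simpa [h0] using hU j) (hbar j)
          rw [h1, hb0]
          simp [max_eq_left, hund j]
        · have hu0 : yund k j = 0 := le_antisymm (by simpa [h1'] using hL j) (hund j)
          rw [h1, hu0]
          simp [max_eq_right (hbar j)]
      have : y (k+1) j = ybar k j := congrFun hy1 j
      rw [this, ← hcomp, reluLayerVal, hyk]
  rw [hyK]
  funext j
  rw [reluNetOut, key (K-1) le_rfl]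
end

section
/- Consider a ReLU neural network with K ≥ 1 layers given by weight matrices W^k ∈ ℝ^{n_k × n_{k−1}} and bias vectors b^k ∈ ℝ^{n_k}, defining layer values y⁰(x) = x, y^k(x) = σ(W^k y^{k−1}(x) + b^k) for k = 1,…,K−1, and output Φ_NN(x) = W^K y^{K−1}(x) + b^K, where σ(t) = max(0,t) componentwise. Fix an input x and suppose bound parameters L^k_j ≤ U^k_j are valid at x, i.e., for every k ∈ {1,…,K−1} and every j, L^k_j ≤ (W^k y^{k−1}(x) + b^k)_j ≤ U^k_j. Then there exist vectors ȳ^k, y̲^k ∈ ℝ^{n_k} and binaries α^k_j ∈ {0,1} such that, with y⁰ = x and y^k = ȳ^k for k = 1,…,K−1: W^k y^{k−1} + b^k = ȳ^k − y̲^k, ȳ^k ≥ 0, y̲^k ≥ 0, ȳ^k_j ≤ U^k_j α^k_j, y̲^k_j ≤ −L^k_j(1 − α^k_j) for all j, and W^K y^{K−1} + b^K = Φ_NN(x). -/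
/-- completeness of the layered big-M mixed-integer encoding of a
ReLU network with `K ≥ 1` layers: if the big-M parameters `L ≤ U` bound every
hidden node's pre-activation at the input `x`, then the mixed-integer system is
feasible (with `y⁰ = x` and `y^k = ȳ^k` on hidden layers) and encodes the exact
network output.  (Layer `k`, `1 ≤ k ≤ K`, has weights `W (k-1)`, bias `b (k-1)`.) -/
theorem bigM_reluNet_complete (K : ℕ) (hK : 1 ≤ K) (n : ℕ → ℕ)
    (W : ∀ k, Matrix (Fin (n (k + 1))) (Fin (n k)) ℝ)
    (b : ∀ k, Fin (n (k + 1)) → ℝ)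
    (x : Fin (n 0) → ℝ)
    (L U : ∀ k, Fin (n (k + 1)) → ℝ)
    (hLU : ∀ k, k < K - 1 → ∀ j, L k j ≤ U k j)
    (hbounds : ∀ k, k < K - 1 → ∀ j,
      L k j ≤ (W k).mulVec (reluLayerVal n W b x k) j + b k j ∧
      (W k).mulVec (reluLayerVal n W b x k) j + b k j ≤ U k j) :
    ∃ (y : ∀ k, Fin (n k) → ℝ) (ybar yund α : ∀ k, Fin (n (k + 1)) → ℝ),
      y 0 = x ∧
      (∀ k, k < K - 1 →
        ((W k).mulVec (y k) + b k = ybar k - yund k) ∧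
        (∀ j, 0 ≤ ybar k j) ∧ (∀ j, 0 ≤ yund k j) ∧
        (y (k + 1) = ybar k) ∧
        (∀ j, α k j = 0 ∨ α k j = 1) ∧
        (∀ j, ybar k j ≤ U k j * α k j) ∧
        (∀ j, yund k j ≤ -L k j * (1 - α k j))) ∧
      (fun j => (W (K - 1)).mulVec (y (K - 1)) j + b (K - 1) j)
        = reluNetOut n W b (K - 1) x := by
  set pre : ∀ k, Fin (n (k + 1)) → ℝ :=
    fun k j => (W k).mulVec (reluLayerVal n W b x k) j + b k j with hpre
  refine ⟨reluLayerVal n W b x,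
    fun k j => max 0 (pre k j),
    fun k j => max 0 (-(pre k j)),
    fun k j => if 0 ≤ pre k j then 1 else 0,
    rfl, ?_, rfl⟩
  intro k hk
  refine ⟨?_, fun j => le_max_left _ _, fun j => le_max_left _ _, ?_, ?_, ?_, ?_⟩
  · funext j
    simp only [Pi.add_apply, Pi.sub_apply]
    rcases le_total 0 (pre k j) with h | h
    · rw [max_eq_right h, max_eq_left (by linarith), hpre]; ring
    · rw [max_eq_left h, max_eq_right (by linarith), hpre]; ring
  · funext j
    show reluLayerVal n W b x (k + 1) j = _
    rw [reluLayerVal]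
  · intro j
    dsimp only
    split <;> simp
  · intro j
    dsimp only
    rcases le_or_gt 0 (pre k j) with h | h
    · rw [max_eq_right h, if_pos h, mul_one]
      exact (hbounds k hk j).2
    · rw [max_eq_left h.le, if_neg (not_le.mpr h), mul_zero]
  · intro j
    dsimp only
    rcases le_or_gt 0 (pre k j) with h | h
    · rw [if_pos h]
      have : -pre k j ≤ 0 := by linarith
      rw [max_eq_left this]; ring_nf; exact le_refl 0
    · rw [if_neg (not_le.mpr h)]
      have hL : L k j ≤ pre k j := (hbounds k hk j).1
      have : 0 ≤ -pre k j := by linarith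
      rw [max_eq_right this]
      linarith
end

section
/- Let Φ : Z → ℝ^m where Z ⊆ ℝ^n, and let Φ_NN : ℝ^n → ℝ^m be the function computed by a ReLU neural network with weights W^k and biases b^k (K layers, as defined by the recursion y⁰ = x, y^k = σ(W^k y^{k−1} + b^k) for k < K, output W^K y^{K−1} + b^K, σ(t) = max(0,t) componentwise). Let ε ∈ ℝ^m with ε > 0 and u_max ∈ ℝ^m with u_max > 0, and suppose |Φ(x) − Φ_NN(x)| ≤ ε componentwise for all x ∈ Z. Then for every x ∈ Z: if there exist vectors y^k, ȳ^k, y̲^k and binaries α^k_j ∈ {0,1} satisfying the mixed-integer linear system (y⁰ = x; for k = 1,…,K−1: W^k y^{k−1} + b^k = ȳ^k − y̲^k, ȳ^k ≥ 0, y̲^k ≥ 0, y^k = ȳ^k, ȳ^k_j ≤ U^k_j α^k_j, y̲^k_j ≤ −L^k_j(1 − α^k_j); y^K = W^K y^{K−1} + b^K) together with the output constraint |y^K| ≤ u_max − ε componentwise, then |Φ(x)| ≤ u_max componentwise. -/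
/-- Proposition 1 of the paper: if the ReLU network `Φ_NN`
(with `K ≥ 1` layers, weights `W`, biases `b`) approximates `Φ` on `Z` with
componentwise error bound `ε > 0`, then for any `x ∈ Z`, feasibility of the
layered big-M mixed-integer linear system together with the tightened output
constraint `|y^K| ≤ u_max − ε` implies the original constraint `|Φ(x)| ≤ u_max`.
(Layer `k`, `1 ≤ k ≤ K`, has weights `W (k-1)`, bias `b (k-1)`; the index `K`
is written `K - 1 + 1`.) -/
theorem prop1_MI_constraints_imply_original (K : ℕ) (hK : 1 ≤ K) (n : ℕ → ℕ)
    (W : ∀ k, Matrix (Fin (n (k + 1))) (Fin (n k)) ℝ)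
    (b : ∀ k, Fin (n (k + 1)) → ℝ)
    (Z : Set (Fin (n 0) → ℝ))
    (Φ : (Fin (n 0) → ℝ) → Fin (n (K - 1 + 1)) → ℝ)
    (ε umax : Fin (n (K - 1 + 1)) → ℝ)
    (hε : ∀ i, 0 < ε i) (humax : ∀ i, 0 < umax i)
    (happrox : ∀ x ∈ Z, ∀ i, |Φ x i - reluNetOut n W b (K - 1) x i| ≤ ε i)
    (L U : ∀ k, Fin (n (k + 1)) → ℝ) :
    ∀ x ∈ Z,
      (∃ (y : ∀ k, Fin (n k) → ℝ) (ybar yund α : ∀ k, Fin (n (k + 1)) → ℝ),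
        y 0 = x ∧
        (∀ k, k < K - 1 →
          ((W k).mulVec (y k) + b k = ybar k - yund k) ∧
          (∀ j, 0 ≤ ybar k j) ∧ (∀ j, 0 ≤ yund k j) ∧
          (y (k + 1) = ybar k) ∧
          (∀ j, α k j = 0 ∨ α k j = 1) ∧
          (∀ j, ybar k j ≤ U k j * α k j) ∧
          (∀ j, yund k j ≤ -L k j * (1 - α k j))) ∧
        (y (K - 1 + 1) = fun j => (W (K - 1)).mulVec (y (K - 1)) j + b (K - 1) j) ∧
        (∀ i, |y (K - 1 + 1) i| ≤ umax i - ε i)) →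
      ∀ i, |Φ x i| ≤ umax i := by
  rintro x hx ⟨y, ybar, yund, α, hy0, hmid, hout, hbound⟩ i
  -- Show y k = reluLayerVal for all k ≤ K-1
  have key : ∀ k, k ≤ K - 1 → y k = reluLayerVal n W b x k := by
    intro k hk
    induction k with
    | zero => simpa [reluLayerVal] using hy0
    | succ m ih =>
      have hm : m < K - 1 := hk
      have ihm := ih (le_of_lt hm)
      obtain ⟨heq, hbarpos, hundpos, hyb, hα, hU, hL⟩ := hmid m hm
      rw [hyb]
      funext j
      have heqj : (W m).mulVec (y m) j + b m j = ybar m j - yund m j := by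
        have := congrFun heq j; simpa using this
      have : ybar m j = max 0 ((W m).mulVec (y m) j + b m j) := by
        rcases hα j with h0 | h1
        · have hb0 : ybar m j = 0 := le_antisymm (by simpa [h0] using hU j) (hbarpos j)
          rw [hb0]
          have : (W m).mulVec (y m) j + b m j ≤ 0 := by
            rw [heqj, hb0]; linarith [hundpos j]
          simp [max_eq_left this]
        · have hu0 : yund m j = 0 := le_antisymm (by simpa [h1] using hL j) (hundpos j)
          have hpos : 0 ≤ (W m).mulVec (y m) j + b m j := by
            rw [heqj, hu0]; simpa using hbarpos j
          rw [max_eq_right hpos, heqj, hu0]; ring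
      rw [this, ihm]
      simp [reluLayerVal]
  have hKout : y (K - 1 + 1) = reluNetOut n W b (K - 1) x := by
    rw [hout, key (K - 1) le_rfl]
    rfl
  have h1 := happrox x hx i
  have h2 := hbound i
  rw [hKout] at h2
  calc |Φ x i| = |(Φ x i - reluNetOut n W b (K - 1) x i) + reluNetOut n W b (K - 1) x i| := by ring_nf
    _ ≤ |Φ x i - reluNetOut n W b (K - 1) x i| + |reluNetOut n W b (K - 1) x i| := abs_add_le _ _
    _ ≤ ε i + (umax i - ε i) := add_le_add h1 h2
    _ = umax i := by ring
end

section
/- Consider a ReLU neural network with weight matrices W^k ∈ ℝ^{n_k × n_{k−1}} and biases b^k ∈ ℝ^{n_k} for k = 1,…,K−1, with layer values y⁰(x) = x and y^k(x) = σ(W^k y^{k−1}(x) + b^k), σ(t) = max(0,t) componentwise. Let L⁰, U⁰ ∈ ℝ^{n_0} and define recursively, for the first layer, U^1_j = b^1_j + Σ_i max(W^1_{ji} U⁰_i, W^1_{ji} L⁰_i) and L^1_j = b^1_j + Σ_i min(W^1_{ji} U⁰_i, W^1_{ji} L⁰_i); and for k = 2,…,K−1, U^k_j = b^k_j + Σ_i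 max( W^k_{ji} max(0, U^{k−1}_i), W^k_{ji} max(0, L^{k−1}_i) ) and L^k_j = b^k_j + Σ_i min( W^k_{ji} max(0, U^{k−1}_i), W^k_{ji} max(0, L^{k−1}_i) ). Then for every input x with L⁰ ≤ x ≤ U⁰ componentwise, and for every k ∈ {1,…,K−1} and every j, the pre-activation satisfies L^k_j ≤ (W^k y^{k−1}(x) + b^k)_j ≤ U^k_j. -/
open Finset

lemma interval_mul_bounds (c l u t : ℝ) (hl : l ≤ t) (hu : t ≤ u) :
    min (c * u) (c * l) ≤ c * t ∧ c * t ≤ max (c * u) (c * l) := by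
  rcases le_total 0 c with hc | hc
  · constructor
    · exact (min_le_right _ _).trans (mul_le_mul_of_nonneg_left hl hc)
    · exact (mul_le_mul_of_nonneg_left hu hc).trans (le_max_left _ _)
  · constructor
    · exact (min_le_left _ _).trans (mul_le_mul_of_nonpos_left hu hc)
    · exact (mul_le_mul_of_nonpos_left hl hc).trans (le_max_right _ _)

/-- correctness of the feasibility-based bound tightening (FBBT)
procedure (Algorithm 1): the recursively computed bounds `Lb k`, `Ub k`
(for the hidden layer `k+1` in 0-based indexing, i.e. layers `1,…,K-1`)
enclose every node's pre-activation `(W^k y^{k-1}(x) + b^k)_j` for all inputs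
`x` in the box `[L⁰, U⁰]`. -/
theorem fbbt_correct (K : ℕ) (n : ℕ → ℕ)
    (W : ∀ k, Matrix (Fin (n (k + 1))) (Fin (n k)) ℝ)
    (b : ∀ k, Fin (n (k + 1)) → ℝ)
    (L0 U0 : Fin (n 0) → ℝ)
    (Lb Ub : ∀ k, Fin (n (k + 1)) → ℝ)
    (hU1 : ∀ j, Ub 0 j = b 0 j + ∑ i, max (W 0 j i * U0 i) (W 0 j i * L0 i))
    (hL1 : ∀ j, Lb 0 j = b 0 j + ∑ i, min (W 0 j i * U0 i) (W 0 j i * L0 i))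
    (hUk : ∀ k, k + 1 < K - 1 → ∀ j, Ub (k + 1) j = b (k + 1) j +
      ∑ i, max (W (k + 1) j i * max 0 (Ub k i)) (W (k + 1) j i * max 0 (Lb k i)))
    (hLk : ∀ k, k + 1 < K - 1 → ∀ j, Lb (k + 1) j = b (k + 1) j +
      ∑ i, min (W (k + 1) j i * max 0 (Ub k i)) (W (k + 1) j i * max 0 (Lb k i))) :
    ∀ x : Fin (n 0) → ℝ, (∀ i, L0 i ≤ x i ∧ x i ≤ U0 i) →
      ∀ k, k < K - 1 → ∀ j,
        Lb k j ≤ (W k).mulVec (reluLayerVal n W b x k) j + b k j ∧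
        (W k).mulVec (reluLayerVal n W b x k) j + b k j ≤ Ub k j := by
  intro x hx
  intro k
  induction k with
  | zero =>
    intro _ j
    rw [hL1, hU1]
    simp only [Matrix.mulVec, dotProduct, reluLayerVal]
    constructor
    · rw [add_comm (b 0 j)]
      gcongr with i
      exact (interval_mul_bounds _ _ _ _ (hx i).1 (hx i).2).1
    · rw [add_comm _ (b 0 j)]
      gcongr with i
      exact (interval_mul_bounds _ _ _ _ (hx i).1 (hx i).2).2
  | succ k ih =>
    intro hk j
    have hk' : k < K - 1 := Nat.lt_of_succ_lt hk
    rw [hLk k hk, hUk k hk]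
    simp only [Matrix.mulVec, dotProduct]
    have hy : ∀ i, max 0 (Lb k i) ≤ reluLayerVal n W b x (k+1) i ∧
        reluLayerVal n W b x (k+1) i ≤ max 0 (Ub k i) := by
      intro i
      have := ih hk' i
      exact ⟨max_le_max le_rfl this.1, max_le_max le_rfl this.2⟩
    constructor
    · rw [add_comm (b (k+1) j)]
      gcongr with i
      exact (interval_mul_bounds _ _ _ _ (hy i).1 (hy i).2).1
    · rw [add_comm _ (b (k+1) j)]
      gcongr with i
      exact (interval_mul_bounds _ _ _ _ (hy i).1 (hy i).2).2
end

section
/- Let Γ, γ, τ > 0 be real constants and let x : ℝ → ℝ be three times differentiable and θ, u, v : ℝ → ℝ be such that, for all t: ẍ(t) = Γ·sin θ(t) − γ·ẋ(t), θ̇(t) = τ⁻¹(u(t) − θ(t)), and θ(t) ∈ (−π/2, π/2). Define ζ(t) = Γ⁻¹(ẍ(t) + γ·ẋ(t)), and suppose u(t) = τ·(v(t) + γ·ẍ(t)) / (Γ·√(1 − ζ(t)²)) + arcsin(ζ(t)). Then the third derivative of x satisfies x⁗⁽³⁾(t) = v(t) for all t, i.e., dddot x = v. -/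
/-! Since `ẍ + γẋ = Γ sin θ`, the signal `ζ` equals `sin θ`, and on `(−π/2, π/2)` the feedback
law collapses to `θ̇ = (v + γẍ)/(Γ cos θ)`; differentiating `ẍ = Γ sin θ − γẋ` once more gives
`x⃛ = Γ cos θ · θ̇ − γẍ = v`. -/

open Real Set

theorem inv_mul_feedback_input_sub {Γ τ θ w : ℝ} (hτ : τ ≠ 0) (hθ : θ ∈ Icc (-(π / 2)) (π / 2)) :
    τ⁻¹ * (τ * w / (Γ * √(1 - sin θ ^ 2)) + arcsin (sin θ) - θ) = w / (Γ * cos θ) := by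
  rw [← cos_eq_sqrt_one_sub_sin_sq hθ.1 hθ.2, arcsin_sin' hθ, add_sub_cancel_right, mul_div_assoc,
    inv_mul_cancel_left₀ hτ]

theorem deriv_deriv_of_deriv_eq_mul_sin_sub {Γ γ t : ℝ} {y θ : ℝ → ℝ}
    (hy : DifferentiableAt ℝ y t) (hθ : DifferentiableAt ℝ θ t)
    (hdyn : ∀ s, deriv y s = Γ * sin (θ s) - γ * y s) :
    deriv (deriv y) t = Γ * (cos (θ t) * deriv θ t) - γ * deriv y t := by
  nth_rw 1 [funext hdyn]
  exact ((((hasDerivAt_sin (θ t)).comp t hθ.hasDerivAt).const_mul Γ).sub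
    (hy.hasDerivAt.const_mul γ)).deriv

theorem quad1D_feedback_linearization_general
    (Γ γ τ : ℝ) (hΓ : 0 < Γ) (hτ : 0 < τ)
    (x θ u v ζ : ℝ → ℝ)
    (hx2 : Differentiable ℝ (deriv x))
    (hθdiff : Differentiable ℝ θ)
    (hdyn1 : ∀ t, deriv (deriv x) t = Γ * Real.sin (θ t) - γ * deriv x t)
    (hdyn2 : ∀ t, deriv θ t = τ⁻¹ * (u t - θ t))
    (hθrange : ∀ t, θ t ∈ Set.Ioo (-(π / 2)) (π / 2))
    (hζ : ∀ t, ζ t = Γ⁻¹ * (deriv (deriv x) t + γ * deriv x t))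
    (hu : ∀ t, u t = τ * (v t + γ * deriv (deriv x) t) / (Γ * Real.sqrt (1 - ζ t ^ 2))
      + Real.arcsin (ζ t)) :
    ∀ t, deriv (deriv (deriv x)) t = v t := by
  intro t
  have hcos : cos (θ t) ≠ 0 := (cos_pos_of_mem_Ioo (hθrange t)).ne'
  have hζ_sin : ζ t = sin (θ t) := by
    rw [hζ t, hdyn1 t, sub_add_cancel, inv_mul_cancel_left₀ hΓ.ne']
  have hθ_deriv : deriv θ t = (v t + γ * deriv (deriv x) t) / (Γ * cos (θ t)) := by
    rw [hdyn2 t, hu t, hζ_sin]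
    exact inv_mul_feedback_input_sub hτ.ne' (Ioo_subset_Icc_self (hθrange t))
  rw [deriv_deriv_of_deriv_eq_mul_sin_sub (hx2 t) (hθdiff t) hdyn1, hθ_deriv]
  field_simp
  ring

/-- feedback linearization of the horizontal 1-D quadrotor
`ẍ = Γ sin θ − γ ẋ`, `θ̇ = τ⁻¹(u − θ)` with `θ(t) ∈ (−π/2, π/2)`: with
`ζ = Γ⁻¹(ẍ + γẋ)`, the input transformation
`u = τ(v + γẍ)/(Γ√(1 − ζ²)) + arcsin ζ` renders the closed loop a triple
integrator, `dddot x = v`. -/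
theorem quad1D_feedback_linearization
    (Γ γ τ : ℝ) (hΓ : 0 < Γ) (hγ : 0 < γ) (hτ : 0 < τ)
    (x θ u v ζ : ℝ → ℝ)
    (hx1 : Differentiable ℝ x)
    (hx2 : Differentiable ℝ (deriv x))
    (hx3 : Differentiable ℝ (deriv (deriv x)))
    (hθdiff : Differentiable ℝ θ)
    (hdyn1 : ∀ t, deriv (deriv x) t = Γ * Real.sin (θ t) - γ * deriv x t)
    (hdyn2 : ∀ t, deriv θ t = τ⁻¹ * (u t - θ t))
    (hθrange : ∀ t, θ t ∈ Set.Ioo (-(π / 2)) (π / 2))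
    (hζ : ∀ t, ζ t = Γ⁻¹ * (deriv (deriv x) t + γ * deriv x t))
    (hu : ∀ t, u t = τ * (v t + γ * deriv (deriv x) t) / (Γ * Real.sqrt (1 - ζ t ^ 2))
      + Real.arcsin (ζ t)) :
    ∀ t, deriv (deriv (deriv x)) t = v t :=
  quad1D_feedback_linearization_general Γ γ τ hΓ hτ x θ u v ζ hx2 hθdiff hdyn1 hdyn2 hθrange hζ hu
end
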